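/- Let C be an abelian category and 𝒲 a class of objects of C. Let 0→A→x B→y C→0 be a Hom(𝒲,−)-exact short exact sequence, and let 0→K₁ᴬ→W₀ᴬ→A→0 and 0→K₁ᶜ→W₀ᶜ→C→0 be short exact sequences with W₀ᶜ ∈ 𝒲. Then there exist an object K₁ᴮ and morphisms forming a commutative 3×3 diagram in which: the three columns are short exact sequences 0→K₁ᴬ→W₀ᴬ→A→0 (the given one), 0→K₁ᴮ→W₀ᴬ⊕W₀ᶜ→B→0, and 0→K₁ᶜ→W₀ᶜ→C→0 (the given one); the middle row is the split short exact sequence 0→W₀ᴬ→W₀ᴬ⊕W₀ᶜ→W₀ᶜ→0 given by the canonical injection and projection; the bottom row is the given sequence 0→A→B→C→0; and the top row 0→K₁ᴬ→K₁ᴮ→K₁ᶜ→0 is a short exact sequence. Moreover: (1) if the first and third columns are Hom(𝒲,−)-exact, then all rows and columns of this diagram are Hom(𝒲,−)-exact; (2) if the bottom row and the first and third columns are Hom(−,𝒲)-exact, then all rows and columns of this diagram are Hom(−,𝒲)-exact. -/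

import Mathlib

/-!
Lift `W₀ᶜ ⟶ C` along `y` to `t : W₀ᶜ ⟶ B`, which `Hom(𝒲,-)`-exactness of the bottom row allows
since `W₀ᶜ ∈ 𝒲`. Then `[fA ≫ x, t] : W₀ᴬ ⊞ W₀ᶜ ⟶ B` is an epimorphism, and `K₁ᴮ` is its kernel.
The top row is short exact by the snake lemma, the cokernel row being zero. For a short exact
sequence, `Hom(𝒲,-)`- and `Hom(-,𝒲)`-exactness only ask for surjectivity of the last map, and
for the top row and middle column this follows by a diagram chase from the outer columns.
-/

open CategoryTheory Category Limits

universe v u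

variable {C : Type u} [Category.{v} C] [Abelian C]

def SES {A B X : C} (f : A ⟶ B) (g : B ⟶ X) : Prop :=
  ∃ w : f ≫ g = 0, (CategoryTheory.ShortComplex.mk f g w).ShortExact

def CovExact (𝒲 : Set C) {A B X : C} (f : A ⟶ B) (g : B ⟶ X) : Prop :=
  ∀ W ∈ 𝒲,
    (Function.Injective fun u : W ⟶ A => u ≫ f) ∧
    (∀ v : W ⟶ B, v ≫ g = 0 → ∃ u : W ⟶ A, u ≫ f = v) ∧
    (Function.Surjective fun v : W ⟶ B => v ≫ g)

def ContraExact (𝒲 : Set C) {A B X : C} (f : A ⟶ B) (g : B ⟶ X) : Prop :=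
  ∀ W ∈ 𝒲,
    (Function.Injective fun u : X ⟶ W => g ≫ u) ∧
    (∀ v : B ⟶ W, f ≫ v = 0 → ∃ u : X ⟶ W, g ≫ u = v) ∧
    (Function.Surjective fun v : B ⟶ W => f ≫ v)

namespace SES

variable {A B X : C} {f : A ⟶ B} {g : B ⟶ X}

lemma mono (h : SES f g) : Mono f := h.2.mono_f

lemma epi (h : SES f g) : Epi g := h.2.epi_g

lemma comp_eq_zero (h : SES f g) : f ≫ g = 0 := h.1

lemma exists_lift (h : SES f g) {W : C} (v : W ⟶ B) (hv : v ≫ g = 0) :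
    ∃ u : W ⟶ A, u ≫ f = v := by
  obtain ⟨_, hse⟩ := h
  have := hse.mono_f
  exact ⟨_, hse.exact.lift_f v hv⟩

lemma exists_desc (h : SES f g) {W : C} (v : B ⟶ W) (hv : f ≫ v = 0) :
    ∃ u : X ⟶ W, g ≫ u = v := by
  obtain ⟨_, hse⟩ := h
  have := hse.epi_g
  exact ⟨_, hse.exact.g_desc v hv⟩

lemma covExact (𝒲 : Set C) (h : SES f g)
    (hs : ∀ W ∈ 𝒲, Function.Surjective fun v : W ⟶ B => v ≫ g) : CovExact 𝒲 f g := by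
  have := h.mono
  exact fun W hW => ⟨fun _ _ => (cancel_mono f).1, h.exists_lift, hs W hW⟩

lemma contraExact (𝒲 : Set C) (h : SES f g)
    (hs : ∀ W ∈ 𝒲, Function.Surjective fun v : B ⟶ W => f ≫ v) : ContraExact 𝒲 f g := by
  have := h.epi
  exact fun W hW => ⟨fun _ _ => (cancel_epi g).1, h.exists_desc, hs W hW⟩

end SES

lemma ses_kernel_ι {A B : C} (f : A ⟶ B) [Epi f] : SES (kernel.ι f) f :=
  ⟨kernel.condition f,
    .mk' (ShortComplex.exact_of_f_is_kernel _ (kernelIsKernel f)) inferInstance inferInstance⟩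

lemma ses_biprod_inl_snd (X Y : C) : SES (biprod.inl : X ⟶ X ⊞ Y) biprod.snd :=
  ⟨biprod.inl_snd, (ShortComplex.Splitting.ofHasBinaryBiproduct X Y).shortExact⟩

lemma covExact_biprod_inl_snd (𝒲 : Set C) (X Y : C) :
    CovExact 𝒲 (biprod.inl : X ⟶ X ⊞ Y) biprod.snd :=
  (ses_biprod_inl_snd X Y).covExact 𝒲 fun _ _ v => ⟨biprod.lift 0 v, biprod.lift_snd _ _⟩

lemma contraExact_biprod_inl_snd (𝒲 : Set C) (X Y : C) :
    ContraExact 𝒲 (biprod.inl : X ⟶ X ⊞ Y) biprod.snd :=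
  (ses_biprod_inl_snd X Y).contraExact 𝒲 fun _ _ v => ⟨biprod.desc v 0, biprod.inl_desc _ _⟩

open ZeroObject in
lemma CategoryTheory.ShortComplex.shortExact_of_columns {L₀ L₁ L₂ : ShortComplex C}
    (φ : L₀ ⟶ L₁) (ψ : L₁ ⟶ L₂) (hL₁ : L₁.ShortExact) (hL₂ : L₂.Exact) [Mono L₂.f]
    (h₁ : SES φ.τ₁ ψ.τ₁) (h₂ : SES φ.τ₂ ψ.τ₂) (h₃ : SES φ.τ₃ ψ.τ₃) : L₀.ShortExact := by
  have := h₁.mono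
  have := h₂.mono
  have := h₃.mono
  have := h₁.epi
  have := h₂.epi
  have := h₃.epi
  have := hL₁.mono_f
  have := hL₁.epi_g
  let S : SnakeInput C :=
    { L₀ := L₀
      L₁ := L₁
      L₂ := L₂
      L₃ := ShortComplex.mk (0 : (0 : C) ⟶ 0) (0 : (0 : C) ⟶ 0) comp_zero
      v₀₁ := φ
      v₁₂ := ψ
      v₂₃ := 0
      w₀₂ := by ext <;> simp [h₁.comp_eq_zero, h₂.comp_eq_zero, h₃.comp_eq_zero]
      w₁₃ := comp_zero
      h₀ := by
        apply isLimitOfIsLimitπ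
        · exact (KernelFork.isLimitMapConeEquiv _ _).symm h₁.2.exact.fIsKernel
        · exact (KernelFork.isLimitMapConeEquiv _ _).symm h₂.2.exact.fIsKernel
        · exact (KernelFork.isLimitMapConeEquiv _ _).symm h₃.2.exact.fIsKernel
      h₃ := by
        apply isColimitOfIsColimitπ <;>
          exact (CokernelCofork.isColimitMapCoconeEquiv _ _).symm
            (CokernelCofork.IsColimit.ofEpiOfIsZero _ (by assumption) (isZero_zero C))
      L₁_exact := hL₁.exact
      epi_L₁_g := inferInstance
      L₂_exact := hL₂
      mono_L₂_f := inferInstance }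
  have : Mono L₀.f := by
    have : Mono (L₀.f ≫ φ.τ₂) := by rw [← φ.comm₁₂]; infer_instance
    exact mono_of_mono _ φ.τ₂
  -- the connecting map of the snake lemma lands in the zero cokernel row
  have : Epi L₀.g :=
    (ShortComplex.exact_iff_epi S.L₁' ((isZero_zero C).eq_of_tgt _ _)).1 S.L₁'_exact
  exact .mk' S.L₀_exact inferInstance inferInstance

lemma SES.exists_epi_from_biprod {A B X W₁ W₂ : C} {x : A ⟶ B} {y : B ⟶ X} (hxy : SES x y)
    {fA : W₁ ⟶ A} {fC : W₂ ⟶ X} [Epi fA] [Epi fC] {t : W₂ ⟶ B} (ht : t ≫ y = fC) :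
    ∃ fB : W₁ ⊞ W₂ ⟶ B, Epi fB ∧ biprod.inl ≫ fB = fA ≫ x ∧ fB ≫ y = biprod.snd ≫ fC := by
  refine ⟨biprod.desc (fA ≫ x) t, ?_, biprod.inl_desc _ _, ?_⟩
  · rw [Preadditive.epi_iff_cancel_zero]
    intro Z k hk
    have hxk : x ≫ k = 0 := by
      rw [← cancel_epi fA, ← assoc, ← biprod.inl_desc (fA ≫ x) t, assoc, hk, comp_zero,
        comp_zero]
    obtain ⟨m, rfl⟩ := hxy.exists_desc k hxk
    have hm : m = 0 := by
      rw [← cancel_epi fC, ← ht, assoc, ← biprod.inr_desc (fA ≫ x) t, assoc, hk, comp_zero,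
        comp_zero]
    rw [hm, comp_zero]
  · ext
    · simp only [biprod.inl_desc_assoc, assoc, hxy.comp_eq_zero, comp_zero,
        biprod.inl_snd_assoc, zero_comp]
    · simp only [biprod.inr_desc_assoc, ht, biprod.inr_snd_assoc]

section HorseshoeDiagram

variable {A B X K1A W0A K1B K1C W0C : C} {x : A ⟶ B} {y : B ⟶ X}
  {gA : K1A ⟶ W0A} {fA : W0A ⟶ A} {gB : K1B ⟶ W0A ⊞ W0C} {fB : W0A ⊞ W0C ⟶ B}
  {gC : K1C ⟶ W0C} {fC : W0C ⟶ X} {x1 : K1A ⟶ K1B} {y1 : K1B ⟶ K1C}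

lemma ses_top_row (hrow : SES x y) (hA : SES gA fA) (hB : SES gB fB) (hC : SES gC fC)
    (hinl : biprod.inl ≫ fB = fA ≫ x) (hsnd : fB ≫ y = biprod.snd ≫ fC)
    (hx1 : x1 ≫ gB = gA ≫ biprod.inl) (hy1 : y1 ≫ gC = gB ≫ biprod.snd) : SES x1 y1 := by
  have := hC.mono
  have := hrow.mono
  have w : x1 ≫ y1 = 0 := by
    rw [← cancel_mono gC, assoc, hy1, reassoc_of% hx1, biprod.inl_snd, comp_zero, zero_comp]
  exact ⟨w, ShortComplex.shortExact_of_columns (L₀ := .mk x1 y1 w)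
    { τ₁ := gA, τ₂ := gB, τ₃ := gC, comm₁₂ := hx1.symm, comm₂₃ := hy1.symm }
    { τ₁ := fA, τ₂ := fB, τ₃ := fC, comm₁₂ := hinl.symm, comm₂₃ := hsnd }
    (ses_biprod_inl_snd W0A W0C).2 hrow.2.exact hA hB hC⟩

lemma covExact_middle_column (𝒲 : Set C) (hxy : SES x y) (hinl : biprod.inl ≫ fB = fA ≫ x)
    (hsnd : fB ≫ y = biprod.snd ≫ fC) (hA : CovExact 𝒲 gA fA) (hC : CovExact 𝒲 gC fC)
    (hB : SES gB fB) : CovExact 𝒲 gB fB := by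
  refine hB.covExact 𝒲 fun W hW v => ?_
  obtain ⟨s, hs⟩ := (hC W hW).2.2 (v ≫ y)
  have hv : (v - s ≫ biprod.inr ≫ fB) ≫ y = 0 := by
    simp only [Preadditive.sub_comp, assoc, hsnd, biprod.inr_snd_assoc]
    exact sub_eq_zero.2 hs.symm
  obtain ⟨u, hu⟩ := hxy.exists_lift _ hv
  obtain ⟨a, rfl⟩ := (hA W hW).2.2 u
  refine ⟨biprod.lift a s, ?_⟩
  dsimp only at hu ⊢
  rw [biprod.lift_eq, Preadditive.add_comp, assoc, assoc, hinl, ← assoc, hu, sub_add_cancel]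

lemma covExact_top_row (𝒲 : Set C) (hxy : SES x y) (hinl : biprod.inl ≫ fB = fA ≫ x)
    (hsnd : fB ≫ y = biprod.snd ≫ fC) (hA : CovExact 𝒲 gA fA) (hB : SES gB fB)
    (hC : SES gC fC) (hy1 : y1 ≫ gC = gB ≫ biprod.snd) (htop : SES x1 y1) :
    CovExact 𝒲 x1 y1 := by
  have := hC.mono
  refine htop.covExact 𝒲 fun W hW v => ?_
  have hv : (v ≫ gC ≫ biprod.inr ≫ fB) ≫ y = 0 := by
    simp only [assoc, hsnd, biprod.inr_snd_assoc, hC.comp_eq_zero, comp_zero]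
  obtain ⟨u, hu⟩ := hxy.exists_lift _ hv
  obtain ⟨a, rfl⟩ := (hA W hW).2.2 u
  have hk : (v ≫ gC ≫ biprod.inr - a ≫ biprod.inl) ≫ fB = 0 := by
    simp only [Preadditive.sub_comp, assoc, hinl]
    exact sub_eq_zero.2 (by simpa only [assoc] using hu.symm)
  obtain ⟨k, hk⟩ := hB.exists_lift _ hk
  refine ⟨k, (cancel_mono gC).1 ?_⟩
  simp only [assoc, hy1, reassoc_of% hk, Preadditive.sub_comp, assoc, biprod.inr_snd,
    biprod.inl_snd, comp_id, comp_zero, sub_zero]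

lemma contraExact_top_row (𝒲 : Set C) (hA : ContraExact 𝒲 gA fA)
    (hx1 : x1 ≫ gB = gA ≫ biprod.inl) (htop : SES x1 y1) : ContraExact 𝒲 x1 y1 := by
  refine htop.contraExact 𝒲 fun W hW v => ?_
  obtain ⟨p, rfl⟩ := (hA W hW).2.2 v
  exact ⟨gB ≫ biprod.fst ≫ p, by simp only [reassoc_of% hx1, biprod.inl_fst_assoc]⟩

lemma contraExact_middle_column (𝒲 : Set C) (hA : ContraExact 𝒲 gA fA)
    (hC : ContraExact 𝒲 gC fC) (hx1 : x1 ≫ gB = gA ≫ biprod.inl)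
    (hy1 : y1 ≫ gC = gB ≫ biprod.snd) (htop : SES x1 y1) (hB : SES gB fB) :
    ContraExact 𝒲 gB fB := by
  refine hB.contraExact 𝒲 fun W hW v => ?_
  obtain ⟨p, hp⟩ := (hA W hW).2.2 (x1 ≫ v)
  have hv : x1 ≫ (v - gB ≫ biprod.fst ≫ p) = 0 := by
    simp only [Preadditive.comp_sub, reassoc_of% hx1, biprod.inl_fst_assoc]
    exact sub_eq_zero.2 hp.symm
  obtain ⟨q, hq⟩ := htop.exists_desc _ hv
  obtain ⟨r, rfl⟩ := (hC W hW).2.2 q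
  refine ⟨biprod.desc p r, ?_⟩
  simp only [biprod.desc_eq, Preadditive.comp_add, ← reassoc_of% hy1]
  rw [hq, add_sub_cancel]

end HorseshoeDiagram

/-- Horseshoe-type 3×3 diagram built from a `Hom(𝒲,-)`-exact sequence
`0→A→B→C→0` and short exact sequences `0→K₁ᴬ→W₀ᴬ→A→0`, `0→K₁ᶜ→W₀ᶜ→C→0` with
`W₀ᶜ ∈ 𝒲`, together with the two "moreover" exactness transfers. -/
theorem stmt_6 (𝒲 : Set C) {A B X K1A W0A K1C W0C : C}
    (x : A ⟶ B) (y : B ⟶ X)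
    (gA : K1A ⟶ W0A) (fA : W0A ⟶ A)
    (gC : K1C ⟶ W0C) (fC : W0C ⟶ X)
    (hrow : SES x y) (hcov : CovExact 𝒲 x y)
    (hA : SES gA fA) (hC : SES gC fC)
    (hWC : W0C ∈ 𝒲) :
    ∃ (K1B : C) (gB : K1B ⟶ W0A ⊞ W0C) (fB : W0A ⊞ W0C ⟶ B)
      (x1 : K1A ⟶ K1B) (y1 : K1B ⟶ K1C),
      -- commutativity of the four squares
      x1 ≫ gB = gA ≫ biprod.inl ∧
      gB ≫ biprod.snd = y1 ≫ gC ∧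
      biprod.inl ≫ fB = fA ≫ x ∧
      fB ≫ y = biprod.snd ≫ fC ∧
      -- the top row, the middle (split) row and the middle column are short exact
      SES x1 y1 ∧
      SES (biprod.inl : W0A ⟶ W0A ⊞ W0C) (biprod.snd : W0A ⊞ W0C ⟶ W0C) ∧
      SES gB fB ∧
      -- (1) if the first and third columns are Hom(𝒲,-)-exact, then so are all rows and columns
      (CovExact 𝒲 gA fA → CovExact 𝒲 gC fC →
        (CovExact 𝒲 x1 y1 ∧
         CovExact 𝒲 (biprod.inl : W0A ⟶ W0A ⊞ W0C) (biprod.snd : W0A ⊞ W0C ⟶ W0C) ∧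
         CovExact 𝒲 x y ∧
         CovExact 𝒲 gA fA ∧ CovExact 𝒲 gB fB ∧ CovExact 𝒲 gC fC)) ∧
      -- (2) if the bottom row and the first and third columns are Hom(-,𝒲)-exact,
      -- then so are all rows and columns
      (ContraExact 𝒲 x y → ContraExact 𝒲 gA fA → ContraExact 𝒲 gC fC →
        (ContraExact 𝒲 x1 y1 ∧
         ContraExact 𝒲 (biprod.inl : W0A ⟶ W0A ⊞ W0C) (biprod.snd : W0A ⊞ W0C ⟶ W0C) ∧
         ContraExact 𝒲 x y ∧
         ContraExact 𝒲 gA fA ∧ ContraExact 𝒲 gB fB ∧ ContraExact 𝒲 gC fC)) := by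
  obtain ⟨t, ht⟩ := (hcov W0C hWC).2.2 fC
  have := hA.epi
  have := hC.epi
  obtain ⟨fB, _, hinl, hsnd⟩ := hrow.exists_epi_from_biprod (fA := fA) ht
  have hB := ses_kernel_ι fB
  obtain ⟨x1, hx1⟩ := hB.exists_lift (gA ≫ biprod.inl)
    (by rw [assoc, hinl, reassoc_of% hA.comp_eq_zero, zero_comp])
  obtain ⟨y1, hy1⟩ := hC.exists_lift (kernel.ι fB ≫ biprod.snd)
    (by rw [assoc, ← hsnd, reassoc_of% hB.comp_eq_zero, zero_comp])
  have htop := ses_top_row hrow hA hB hC hinl hsnd hx1 hy1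
  refine ⟨kernel fB, kernel.ι fB, fB, x1, y1, hx1, hy1.symm, hinl, hsnd, htop,
    ses_biprod_inl_snd W0A W0C, hB, fun hcA hcC => ⟨?_, covExact_biprod_inl_snd 𝒲 W0A W0C,
      hcov, hcA, ?_, hcC⟩, fun hct hcA hcC => ⟨?_, contraExact_biprod_inl_snd 𝒲 W0A W0C,
      hct, hcA, ?_, hcC⟩⟩
  · exact covExact_top_row 𝒲 hrow hinl hsnd hcA hB hC hy1 htop
  · exact covExact_middle_column 𝒲 hrow hinl hsnd hcA hcC hB
  · exact contraExact_top_row 𝒲 hcA hx1 htop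
  · exact contraExact_middle_column 𝒲 hcA hcC hx1 hy1 htop hB
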